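/- Let k ≥ 2 and let ℓ, m be positive integers with ℓ ≤ m. Then there exists a code C ⊆ [k]^m with |C| ≥ k^m / (C(m,ℓ)²·k^{m−ℓ}) such that every two distinct codewords of C have longest common subsequence of length less than ℓ. (Greedy construction at the core of the proof of Theorem 2.4 of the paper: strings can be chosen iteratively, each new string having LCS less than ℓ with all previously chosen strings.) -/

import Mathlib

/-- `s` (of length `ℓ`) is a subsequence of `t` (of length `m`): there are indices
`i₁ < ⋯ < i_ℓ` with `t (i_j) = s j` for all `j`. -/
def IsSubseq {α : Type*} {ℓ m : ℕ} (s : Fin ℓ → α) (t : Fin m → α) : Prop :=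
  ∃ f : Fin ℓ → Fin m, StrictMono f ∧ ∀ j, t (f j) = s j

/-!
Call two strings of length `m` close if they share a common subsequence of length `ℓ`. A string
`v` close to `u` is pinned down by the positions `f` of the common subsequence in `u`, the
positions `g` in `v`, and the `m - ℓ` letters of `v` off the range of `g`; so every string has
at most `C(m,ℓ)² k^(m-ℓ)` close strings. A maximal set of pairwise non-close strings is a code whose
closeness balls cover `[k]^m`, hence it has at least `k^m / (C(m,ℓ)² k^(m-ℓ))` codewords.
-/

open Finset

theorem Fintype.card_orderEmbedding_fin (ℓ m : ℕ) :
    Fintype.card (Fin ℓ ↪o Fin m) = m.choose ℓ := by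
  rw [Fintype.card_eq_nat_card, Nat.card_congr Set.powersetCard.ofFinEmbEquiv,
    Set.powersetCard.card, Nat.card_eq_fintype_card, Fintype.card_fin]

theorem card_filter_comp_eq_le {ι κ α : Type*} [Fintype ι] [DecidableEq ι] [Fintype κ]
    [Fintype α] [DecidableEq (κ → α)] (g : κ ↪ ι) (t : κ → α) :
    #{v : ι → α | v ∘ g = t} ≤ Fintype.card α ^ (Fintype.card ι - Fintype.card κ) := by
  let restrict (v : ι → α) : {i // i ∉ Set.range g} → α := fun i => v i
  have h_inj : Set.InjOn restrict {v : ι → α | v ∘ g = t} := by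
    intro v hv w hw hvw
    funext i
    by_cases hi : i ∈ Set.range g
    · obtain ⟨j, rfl⟩ := hi
      exact (congrFun hv j).trans (congrFun hw j).symm
    · exact congrFun hvw ⟨i, hi⟩
  calc #{v : ι → α | v ∘ g = t}
      ≤ #(univ : Finset ({i // i ∉ Set.range g} → α)) :=
        card_le_card_of_injOn restrict (fun _ _ => mem_univ _) (by simpa using h_inj)
    _ = Fintype.card α ^ (Fintype.card ι - Fintype.card κ) := by
        rw [card_univ, Fintype.card_fun, Fintype.card_subtype_compl, Fintype.card_range]

theorem Finset.exists_pairwise_not_rel_card_le_mul {α : Type*} (R : α → α → Prop)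
    [DecidableRel R] (hrefl : ∀ u, R u u) (hsymm : ∀ u v, R u v → R v u) (S : Finset α)
    (B : ℕ) (hB : ∀ u ∈ S, #{v ∈ S | R u v} ≤ B) :
    ∃ C ⊆ S, (C : Set α).Pairwise (fun u v => ¬R u v) ∧ #S ≤ B * #C := by
  classical
  let independent : Finset (Finset α) :=
    {C ∈ S.powerset | (C : Set α).Pairwise fun u v => ¬R u v}
  obtain ⟨C, hC, hmax⟩ := independent.exists_max_image card ⟨∅, by simp [independent]⟩
  obtain ⟨hCS, hCind⟩ : C ⊆ S ∧ (C : Set α).Pairwise fun u v => ¬R u v := by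
    simpa [independent] using hC
  have hcover : S ⊆ C.biUnion fun u => {v ∈ S | R u v} := by
    intro v hv
    by_contra hvC
    have hfar : ∀ u ∈ C, ¬R u v := fun u hu huv =>
      hvC (mem_biUnion.2 ⟨u, hu, mem_filter.2 ⟨hv, huv⟩⟩)
    have hvC' : v ∉ C := fun h => hfar v h (hrefl v)
    have hinsert : insert v C ∈ independent := by
      simp only [independent, mem_filter, mem_powerset, coe_insert]
      exact ⟨insert_subset hv hCS,
        hCind.insert fun u hu _ => ⟨fun h => hfar u hu (hsymm _ _ h), hfar u hu⟩⟩
    have hle := hmax _ hinsert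
    rw [card_insert_of_notMem hvC'] at hle
    omega
  refine ⟨C, hCS, hCind, ?_⟩
  calc #S ≤ _ := card_le_card hcover
    _ ≤ #C * B := card_biUnion_le_card_mul _ _ _ fun u hu => hB u (hCS hu)
    _ = B * #C := mul_comm _ _

section CommonSubseq

variable {α : Type*} {ℓ m : ℕ}

def HaveCommonSubseq (ℓ : ℕ) (u v : Fin m → α) : Prop :=
  ∃ s : Fin ℓ → α, IsSubseq s u ∧ IsSubseq s v

theorem HaveCommonSubseq.symm {u v : Fin m → α} (h : HaveCommonSubseq ℓ u v) :
    HaveCommonSubseq ℓ v u :=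
  let ⟨s, hu, hv⟩ := h
  ⟨s, hv, hu⟩

theorem haveCommonSubseq_refl (hℓm : ℓ ≤ m) (u : Fin m → α) : HaveCommonSubseq ℓ u u :=
  have hprefix : IsSubseq (u ∘ Fin.castLE hℓm) u :=
    ⟨Fin.castLE hℓm, Fin.strictMono_castLE hℓm, fun _ => rfl⟩
  ⟨_, hprefix, hprefix⟩

theorem HaveCommonSubseq.exists_orderEmbedding {u v : Fin m → α}
    (h : HaveCommonSubseq ℓ u v) : ∃ f g : Fin ℓ ↪o Fin m, v ∘ g = u ∘ f := by
  obtain ⟨s, ⟨f, hf, hfu⟩, ⟨g, hg, hgv⟩⟩ := h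
  exact ⟨.ofStrictMono f hf, .ofStrictMono g hg, funext fun j => (hgv j).trans (hfu j).symm⟩

open Classical in
theorem card_filter_haveCommonSubseq_le [Fintype α] (ℓ : ℕ) (u : Fin m → α) :
    #({v | HaveCommonSubseq ℓ u v} : Finset (Fin m → α)) ≤
      m.choose ℓ ^ 2 * Fintype.card α ^ (m - ℓ) := by
  have hcover : ({v | HaveCommonSubseq ℓ u v} : Finset (Fin m → α)) ⊆
      (univ : Finset ((Fin ℓ ↪o Fin m) × (Fin ℓ ↪o Fin m))).biUnion
        fun fg => {v | v ∘ fg.2 = u ∘ fg.1} := by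
    intro v hv
    obtain ⟨f, g, hfg⟩ := (mem_filter.1 hv).2.exists_orderEmbedding
    exact mem_biUnion.2 ⟨(f, g), mem_univ _, mem_filter.2 ⟨mem_univ _, hfg⟩⟩
  calc _ ≤ _ := card_le_card hcover
    _ ≤ _ := card_biUnion_le_card_mul _ _ _ fun fg _ => by
        simpa using card_filter_comp_eq_le fg.2.toEmbedding (u ∘ fg.1)
    _ = _ := by rw [card_univ, Fintype.card_prod, Fintype.card_orderEmbedding_fin, sq]

end CommonSubseq

theorem greedy_small_lcs_code_general (k ℓ m : ℕ) (hℓm : ℓ ≤ m) :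
    ∃ C : Finset (Fin m → Fin k),
      (k : ℝ) ^ m / ((m.choose ℓ : ℝ) ^ 2 * (k : ℝ) ^ (m - ℓ)) ≤ C.card ∧
      ∀ u ∈ C, ∀ v ∈ C, u ≠ v →
        ¬∃ s : Fin ℓ → Fin k, IsSubseq s u ∧ IsSubseq s v := by
  classical
  obtain ⟨C, -, hC, hcard⟩ := exists_pairwise_not_rel_card_le_mul (HaveCommonSubseq ℓ)
    (haveCommonSubseq_refl hℓm) (fun _ _ h => h.symm) (univ : Finset (Fin m → Fin k))
    (m.choose ℓ ^ 2 * k ^ (m - ℓ))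
    fun u _ => by simpa using card_filter_haveCommonSubseq_le ℓ u
  refine ⟨C, div_le_of_le_mul₀ (by positivity) (by positivity) ?_, hC⟩
  rw [card_univ, Fintype.card_fun, Fintype.card_fin, Fintype.card_fin] at hcard
  rw [mul_comm]
  exact_mod_cast hcard

/-- Let `k ≥ 2` and `1 ≤ ℓ ≤ m`. Then there exists a code `C ⊆ [k]^m` with
`|C| ≥ k^m / (C(m,ℓ)² k^{m-ℓ})` such that every two distinct codewords of `C` have
longest common subsequence of length less than `ℓ` (no string of length `ℓ` is a common
subsequence of two distinct codewords). -/
theorem greedy_small_lcs_code (k ℓ m : ℕ) (hk : 2 ≤ k) (hℓ : 0 < ℓ) (hℓm : ℓ ≤ m) :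
    ∃ C : Finset (Fin m → Fin k),
      (k : ℝ) ^ m / ((m.choose ℓ : ℝ) ^ 2 * (k : ℝ) ^ (m - ℓ)) ≤ C.card ∧
      ∀ u ∈ C, ∀ v ∈ C, u ≠ v →
        ¬∃ s : Fin ℓ → Fin k, IsSubseq s u ∧ IsSubseq s v :=
  greedy_small_lcs_code_general k ℓ m hℓm
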